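/- Let X be Polish, H ⊆ C_b(X) a linear subspace containing constants, μ0 a Borel probability measure, Q = {μ : ∫ h dμ = ∫ h dμ0 for all h ∈ H}, β a differentiable nondecreasing convex penalty function whose conjugate is β*, γ > 0, β_γ(x) = β(γx)/γ, β*_γ(y) = β*(y)/γ, and θ a Borel probability measure such that some π ∈ Q satisfies π ≪ θ and ∫ β*(dπ/dθ) dθ < ∞. Fix f ∈ C_b(X). If ĥ ∈ H minimizes h ↦ ∫ h dμ0 + ∫ β_γ(f − h) dθ over H, then the probability measure μ̂ defined by dμ̂/dθ = β_γ′(f − ĥ) is a maximizer of μ ↦ ∫ f dμ − (1/γ)∫ β*(dμ/dθ) dθ over Q; in particular φ_{θ,γ}(f) = ∫ f dμ̂ − (1/γ)∫ β*(dμ̂/dθ) dθ. -/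

import Mathlib

/-!
Perturbing the minimizer `ĥ` in a direction `h ∈ H` and differentiating under the integral gives
`∫ β'(γ (f - ĥ)) h dθ = ∫ h dμ0`: the function `β'(γ (f - ĥ))` is the `θ`-density of a measure
in `Q`. For `μ ∈ Q` with density `ρ` and any `h ∈ H`, the Fenchel–Young inequality
`γ (f - h) ρ ≤ β (γ (f - h)) + β* ρ` integrates to weak duality
`∫ f dμ - (1/γ) ∫ β* ρ dθ ≤ ∫ h dμ0 + ∫ β_γ (f - h) dθ`. For `ρ = β'(γ (f - ĥ))` and `h = ĥ`
Fenchel–Young is an equality, so `μ̂` attains the value of `ĥ`, which is `φ_{θ,γ}(f)`.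
-/

open MeasureTheory BoundedContinuousFunction Filter Topology

/-- Convex conjugate `β*(y) = sup_{x ∈ ℝ} (x*y - β x)`. -/
noncomputable def betaConj (β : ℝ → ℝ) (y : ℝ) : ℝ :=
  sSup {z : ℝ | ∃ x : ℝ, z = x * y - β x}

/-- The superhedging functional `φ(f) = inf {∫ h dμ0 : h ∈ H, h ≥ f}`. -/
noncomputable def phi {X : Type*} [TopologicalSpace X] [MeasurableSpace X]
    (μ0 : Measure X) (H : Set (X →ᵇ ℝ)) (f : X →ᵇ ℝ) : ℝ :=
  sInf {r : ℝ | ∃ h ∈ H, (∀ x, f x ≤ h x) ∧ r = ∫ x, h x ∂μ0}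

/-- The regularized (penalized) superhedging functional
`φ_{θ,γ}(f) = inf_{h ∈ H} { ∫ h dμ0 + ∫ β_γ(f - h) dθ }` with `β_γ(x) = β(γ x)/γ`. -/
noncomputable def phiReg {X : Type*} [TopologicalSpace X] [MeasurableSpace X]
    (μ0 θ : Measure X) (H : Set (X →ᵇ ℝ)) (β : ℝ → ℝ) (γ : ℝ) (f : X →ᵇ ℝ) : ℝ :=
  sInf {r : ℝ | ∃ h ∈ H, r = (∫ x, h x ∂μ0) + ∫ x, β (γ * (f x - h x)) / γ ∂θ}

/-- `μ ∈ Q` iff `μ` is a Borel probability measure with `∫ h dμ = ∫ h dμ0` for all `h ∈ H`. -/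
def memQ {X : Type*} [TopologicalSpace X] [MeasurableSpace X]
    (μ0 : Measure X) (H : Set (X →ᵇ ℝ)) (μ : Measure X) : Prop :=
  IsProbabilityMeasure μ ∧ ∀ h ∈ H, ∫ x, h x ∂μ = ∫ x, h x ∂μ0

section ConvexPenalty

variable {β : ℝ → ℝ}

theorem ConvexOn.deriv_mul_sub_le (hβ : ConvexOn ℝ Set.univ β) (hβd : Differentiable ℝ β)
    (u y : ℝ) : deriv β u * (y - u) ≤ β y - β u := by
  rcases lt_trichotomy u y with h | rfl | h
  · have := hβ.deriv_le_slope trivial trivial h (hβd u)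
    rwa [slope_def_field, le_div_iff₀ (sub_pos.2 h)] at this
  · simp
  · have := hβ.slope_le_deriv trivial trivial h (hβd u)
    rw [slope_def_field, div_le_iff₀ (sub_pos.2 h)] at this
    linarith

theorem ConvexOn.abs_deriv_le (hβ : ConvexOn ℝ Set.univ β) (hβd : Differentiable ℝ β)
    {R y : ℝ} (hy : |y| ≤ R) : |deriv β y| ≤ |deriv β (-R)| + |deriv β R| := by
  have hmono := hβ.monotoneOn_deriv fun x _ => hβd x
  have hlo : deriv β (-R) ≤ deriv β y := hmono trivial trivial (neg_le_of_abs_le hy)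
  have hhi : deriv β y ≤ deriv β R := hmono trivial trivial (le_of_abs_le hy)
  rw [abs_le]
  constructor <;> linarith [neg_abs_le (deriv β (-R)), le_abs_self (deriv β R),
    abs_nonneg (deriv β (-R)), abs_nonneg (deriv β R)]

theorem betaConj_bddAbove (hβ0 : ∀ x, 0 ≤ β x) (hβsl : Tendsto (fun x => β x / x) atTop atTop)
    {y : ℝ} (hy : 0 ≤ y) : BddAbove {z : ℝ | ∃ x : ℝ, z = x * y - β x} := by
  obtain ⟨a, ha⟩ := (hβsl.eventually_ge_atTop y).exists_forall_of_atTop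
  refine ⟨max a 1 * y, ?_⟩
  rintro _ ⟨x, rfl⟩
  rcases le_or_gt x (max a 1) with hx | hx
  · nlinarith [hβ0 x]
  · have hx0 : 0 < x := lt_of_lt_of_le one_pos ((le_max_right a 1).trans hx.le)
    have hyx : y * x ≤ β x := (le_div_iff₀ hx0).1 (ha x ((le_max_left a 1).trans hx.le))
    nlinarith [le_max_right a 1]

theorem le_betaConj (hβ0 : ∀ x, 0 ≤ β x) (hβsl : Tendsto (fun x => β x / x) atTop atTop)
    {y : ℝ} (hy : 0 ≤ y) (x : ℝ) : x * y - β x ≤ betaConj β y :=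
  le_csSup (betaConj_bddAbove hβ0 hβsl hy) ⟨x, rfl⟩

theorem betaConj_deriv (hβ : ConvexOn ℝ Set.univ β) (hβd : Differentiable ℝ β) (u : ℝ) :
    betaConj β (deriv β u) = u * deriv β u - β u := by
  refine IsGreatest.csSup_eq ⟨⟨u, rfl⟩, ?_⟩
  rintro _ ⟨x, rfl⟩
  nlinarith [hβ.deriv_mul_sub_le hβd u x]

end ConvexPenalty

section Integrals

variable {X : Type*} [TopologicalSpace X] [MeasurableSpace X] [OpensMeasurableSpace X]
  {θ : Measure X} [IsFiniteMeasure θ] {β : ℝ → ℝ}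

theorem BoundedContinuousFunction.integrable_comp (u : X →ᵇ ℝ) {g : ℝ → ℝ} (hg : Continuous g) :
    Integrable (fun x => g (u x)) θ := by
  obtain ⟨C, hC⟩ := (isCompact_closedBall (0 : ℝ) ‖u‖).exists_bound_of_continuousOn hg.continuousOn
  refine Integrable.of_bound (hg.comp u.continuous).aestronglyMeasurable C (.of_forall fun x => ?_)
  exact hC _ (mem_closedBall_zero_iff.2 (u.norm_coe_le_norm x))

theorem integrable_deriv_comp_mul (hβ : ConvexOn ℝ Set.univ β) (hβd : Differentiable ℝ β)
    (u v : X →ᵇ ℝ) : Integrable (fun x => deriv β (u x) * v x) θ := by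
  have hm : Measurable fun x => deriv β (u x) * v x :=
    ((measurable_deriv β).comp u.continuous.measurable).mul v.continuous.measurable
  refine Integrable.of_bound hm.aestronglyMeasurable ((|deriv β (-‖u‖)| + |deriv β ‖u‖|) * ‖v‖)
    (.of_forall fun x => ?_)
  rw [norm_mul]
  exact mul_le_mul (hβ.abs_deriv_le hβd (u.norm_coe_le_norm x)) (v.norm_coe_le_norm x)
    (norm_nonneg _) (by positivity)

theorem hasDerivAt_integral_comp_add_mul (hβ : ConvexOn ℝ Set.univ β)
    (hβd : Differentiable ℝ β) (u v : X →ᵇ ℝ) :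
    HasDerivAt (fun t => ∫ x, β (u x + t * v x) ∂θ) (∫ x, deriv β (u x) * v x ∂θ) 0 := by
  set R := ‖u‖ + ‖v‖
  have hR : ∀ x, ∀ t ∈ Set.Icc (-1 : ℝ) 1, |u x + t * v x| ≤ R := by
    intro x t ht
    have ht' : |t| ≤ 1 := abs_le.2 ht
    calc |u x + t * v x| ≤ |u x| + |t| * |v x| := by rw [← abs_mul]; exact abs_add_le _ _
      _ ≤ ‖u‖ + 1 * ‖v‖ := by
          gcongr
          · exact u.norm_coe_le_norm x
          · exact v.norm_coe_le_norm x
      _ = R := by ring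
  have hcont : ∀ t, Continuous fun x => β (u x + t * v x) := fun t =>
    hβd.continuous.comp (u.continuous.add (continuous_const.mul v.continuous))
  have key := hasDerivAt_integral_of_dominated_loc_of_deriv_le (μ := θ)
    (F := fun t x => β (u x + t * v x)) (F' := fun t x => deriv β (u x + t * v x) * v x)
    (bound := fun _ => (|deriv β (-R)| + |deriv β R|) * ‖v‖)
    (Icc_mem_nhds (by norm_num : (-1 : ℝ) < 0) one_pos)
    (.of_forall fun t => (hcont t).aestronglyMeasurable)
    (by simpa using u.integrable_comp hβd.continuous)
    (by simpa using (integrable_deriv_comp_mul hβ hβd u v).aestronglyMeasurable)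
    (.of_forall fun x t ht => ?_) (integrable_const _)
    (.of_forall fun x t _ => ?_)
  · simpa using key.2
  · rw [norm_mul]
    exact mul_le_mul (hβ.abs_deriv_le hβd (hR x t ht)) (v.norm_coe_le_norm x)
      (norm_nonneg _) (by positivity)
  · exact (hβd _).hasDerivAt.comp t ((hasDerivAt_mul_const (v x)).const_add (u x))

end Integrals

theorem integral_withDensity_ofReal {X : Type*} [MeasurableSpace X] {θ : Measure X} {D : X → ℝ}
    (hDm : Measurable D) (hD0 : ∀ x, 0 ≤ D x) (g : X → ℝ) :
    ∫ x, g x ∂(θ.withDensity fun x => ENNReal.ofReal (D x)) = ∫ x, D x * g x ∂θ := by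
  rw [integral_withDensity_eq_integral_toReal_smul hDm.ennreal_ofReal
    (.of_forall fun _ => ENNReal.ofReal_lt_top)]
  simp only [ENNReal.toReal_ofReal (hD0 _), smul_eq_mul]

theorem memQ_withDensity_ofReal {X : Type*} [TopologicalSpace X] [MeasurableSpace X]
    {μ0 θ : Measure X} [IsProbabilityMeasure μ0] {H : Set (X →ᵇ ℝ)} (hH1 : const X 1 ∈ H)
    {D : X → ℝ} (hDm : Measurable D) (hD0 : ∀ x, 0 ≤ D x)
    (hD : ∀ h ∈ H, ∫ x, D x * h x ∂θ = ∫ x, h x ∂μ0) :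
    memQ μ0 H (θ.withDensity fun x => ENNReal.ofReal (D x)) := by
  have hD1 : ∫ x, D x ∂θ = 1 := by simpa using hD _ hH1
  refine ⟨⟨?_⟩, fun h hH => by rw [integral_withDensity_ofReal hDm hD0, hD h hH]⟩
  rw [withDensity_apply _ MeasurableSet.univ, Measure.restrict_univ,
    ← ofReal_integral_eq_lintegral_ofReal (.of_integral_ne_zero (by simp [hD1]))
      (.of_forall hD0), hD1, ENNReal.ofReal_one]

noncomputable def penalizedCost {X : Type*} [TopologicalSpace X] [MeasurableSpace X]
    (μ0 θ : Measure X) (β : ℝ → ℝ) (γ : ℝ) (f h : X →ᵇ ℝ) : ℝ :=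
  (∫ x, h x ∂μ0) + ∫ x, β (γ * (f x - h x)) / γ ∂θ

theorem phiReg_eq_of_isMinOn {X : Type*} [TopologicalSpace X] [MeasurableSpace X]
    {μ0 θ : Measure X} {H : Set (X →ᵇ ℝ)} {β : ℝ → ℝ} {γ : ℝ} {f hhat : X →ᵇ ℝ}
    (hmin : IsMinOn (penalizedCost μ0 θ β γ f) H hhat) (hhatH : hhat ∈ H) :
    phiReg μ0 θ H β γ f = penalizedCost μ0 θ β γ f hhat :=
  IsLeast.csInf_eq ⟨⟨hhat, hhatH, rfl⟩, by rintro _ ⟨h, hH, rfl⟩; exact hmin hH⟩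

section Duality

variable {X : Type*} [TopologicalSpace X] [MeasurableSpace X] [OpensMeasurableSpace X]
  {μ0 θ : Measure X} [IsFiniteMeasure θ] {β : ℝ → ℝ} {γ : ℝ}

theorem integral_deriv_mul_eq_of_isMinOn [IsFiniteMeasure μ0] (hβ : ConvexOn ℝ Set.univ β)
    (hβd : Differentiable ℝ β) (hγ : γ ≠ 0) {H : Submodule ℝ (X →ᵇ ℝ)} {f hhat : X →ᵇ ℝ}
    (hmin : IsMinOn (penalizedCost μ0 θ β γ f) H hhat) (hhatH : hhat ∈ H)
    {h : X →ᵇ ℝ} (hH : h ∈ H) :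
    ∫ x, deriv β (γ * (f x - hhat x)) * h x ∂θ = ∫ x, h x ∂μ0 := by
  set u : X →ᵇ ℝ := γ • (f - hhat)
  set v : X →ᵇ ℝ := -(γ • h)
  set ψ : ℝ → ℝ := fun t =>
    ((∫ x, hhat x ∂μ0) + t * ∫ x, h x ∂μ0) + (∫ x, β (u x + t * v x) ∂θ) / γ
  have hψ : ∀ t, ψ t = penalizedCost μ0 θ β γ f (hhat + t • h) := by
    intro t
    simp only [ψ, penalizedCost, coe_add, coe_smul, Pi.add_apply, smul_eq_mul]
    rw [integral_add (hhat.integrable μ0) ((h.integrable μ0).const_mul t), integral_const_mul,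
      integral_div]
    congr 3 with x
    simp only [u, v, coe_smul, coe_sub, coe_neg, Pi.sub_apply, Pi.neg_apply, smul_eq_mul]
    congr 1
    ring
  have hloc : IsLocalMin ψ 0 := .of_forall fun t => by
    rw [hψ, hψ, zero_smul, add_zero]
    exact hmin (H.add_mem hhatH (H.smul_mem t hH))
  have hderiv := ((hasDerivAt_mul_const (∫ x, h x ∂μ0)).const_add (∫ x, hhat x ∂μ0)).add
    ((hasDerivAt_integral_comp_add_mul (θ := θ) hβ hβd u v).div_const γ)
  have hv : ∫ x, deriv β (u x) * v x ∂θ = -γ * ∫ x, deriv β (γ * (f x - hhat x)) * h x ∂θ := by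
    rw [← integral_const_mul]
    congr 1 with x
    simp only [u, v, coe_smul, coe_sub, coe_neg, Pi.sub_apply, Pi.neg_apply, smul_eq_mul]
    ring
  have := hloc.hasDerivAt_eq_zero hderiv
  rw [hv, neg_mul, neg_div, mul_div_cancel_left₀ _ hγ] at this
  linarith

theorem integral_deriv_mul_sub_betaConj_eq (hβ : ConvexOn ℝ Set.univ β)
    (hβd : Differentiable ℝ β) (hγ : γ ≠ 0) (f g : X →ᵇ ℝ) :
    ∫ x, deriv β (γ * (f x - g x)) * f x ∂θ -
        (1 / γ) * ∫ x, betaConj β (deriv β (γ * (f x - g x))) ∂θ =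
      ∫ x, deriv β (γ * (f x - g x)) * g x ∂θ + ∫ x, β (γ * (f x - g x)) / γ ∂θ := by
  set A : X →ᵇ ℝ := γ • (f - g)
  have hDf : Integrable (fun x => deriv β (A x) * f x) θ := integrable_deriv_comp_mul hβ hβd A f
  have hDg : Integrable (fun x => deriv β (A x) * g x) θ := integrable_deriv_comp_mul hβ hβd A g
  have hβA : Integrable (fun x => β (A x)) θ := A.integrable_comp hβd.continuous
  have hconj : ∀ x, betaConj β (deriv β (A x)) =
      γ * (deriv β (A x) * f x) - γ * (deriv β (A x) * g x) - β (A x) := fun x => by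
    rw [betaConj_deriv hβ hβd]
    simp only [A, coe_smul, coe_sub, Pi.sub_apply, smul_eq_mul]
    ring
  change ∫ x, deriv β (A x) * f x ∂θ - (1 / γ) * ∫ x, betaConj β (deriv β (A x)) ∂θ =
    ∫ x, deriv β (A x) * g x ∂θ + ∫ x, β (A x) / γ ∂θ
  have hDfg : Integrable
      (fun x => γ * (deriv β (A x) * f x) - γ * (deriv β (A x) * g x)) θ :=
    (hDf.const_mul γ).sub (hDg.const_mul γ)
  simp only [hconj]
  rw [integral_sub hDfg hβA, integral_sub (hDf.const_mul γ) (hDg.const_mul γ),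
    integral_const_mul, integral_const_mul, integral_div]
  field_simp
  ring

theorem integral_sub_betaConj_le_penalizedCost (hβ0 : ∀ x, 0 ≤ β x)
    (hβsl : Tendsto (fun x => β x / x) atTop atTop) (hβc : Continuous β) (hγ : 0 < γ)
    {H : Set (X →ᵇ ℝ)} {μ : Measure X} (hμ : memQ μ0 H μ) (hac : μ ≪ θ)
    (hint : Integrable (fun x => betaConj β ((μ.rnDeriv θ x).toReal)) θ)
    (f : X →ᵇ ℝ) {h : X →ᵇ ℝ} (hH : h ∈ H) :
    ∫ x, f x ∂μ - (1 / γ) * ∫ x, betaConj β ((μ.rnDeriv θ x).toReal) ∂θ ≤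
      penalizedCost μ0 θ β γ f h := by
  have : IsProbabilityMeasure μ := hμ.1
  set ρ : X → ℝ := fun x => (μ.rnDeriv θ x).toReal
  have hcost : Integrable (fun x => β (γ * (f x - h x)) / γ) θ :=
    ((γ • (f - h)).integrable_comp hβc).div_const γ
  have hpt : ∀ x, ρ x • (f - h) x ≤ β (γ * (f x - h x)) / γ + betaConj β (ρ x) / γ := by
    intro x
    have := le_betaConj hβ0 hβsl (ENNReal.toReal_nonneg : 0 ≤ ρ x) (γ * (f x - h x))
    rw [← add_div, le_div_iff₀ hγ]
    simp only [coe_sub, Pi.sub_apply, smul_eq_mul]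
    linarith
  have hmajor : Integrable (fun x => β (γ * (f x - h x)) / γ + betaConj β (ρ x) / γ) θ :=
    hcost.add (hint.div_const γ)
  have hmono := integral_mono ((integrable_rnDeriv_smul_iff hac).2 ((f - h).integrable μ))
    hmajor hpt
  rw [integral_rnDeriv_smul hac, integral_add hcost (hint.div_const γ), integral_div,
    integral_div] at hmono
  have hfh : ∫ x, (f - h) x ∂μ = ∫ x, f x ∂μ - ∫ x, h x ∂μ0 := by
    rw [← hμ.2 h hH]
    exact integral_sub (f.integrable μ) (h.integrable μ)
  rw [hfh] at hmono
  rw [penalizedCost, one_div_mul_eq_div, integral_div]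
  linarith

end Duality

theorem statement5_general {X : Type*} [TopologicalSpace X]
    [MeasurableSpace X] [BorelSpace X]
    (μ0 θ : Measure X) [IsProbabilityMeasure μ0] [IsProbabilityMeasure θ]
    (H : Submodule ℝ (X →ᵇ ℝ))
    (hconst : ∀ c : ℝ, BoundedContinuousFunction.const X c ∈ H)
    (β : ℝ → ℝ) (hβ0 : ∀ x, 0 ≤ β x) (hβdiff : Differentiable ℝ β)
    (hβmono : Monotone β) (hβconv : ConvexOn ℝ Set.univ β)
    (hβsl : Tendsto (fun x => β x / x) atTop atTop)
    (γ : ℝ) (hγ : 0 < γ)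
    (f : X →ᵇ ℝ)
    (hhat : X →ᵇ ℝ) (hhatH : hhat ∈ H)
    (hmin : ∀ h ∈ H,
      (∫ x, hhat x ∂μ0) + ∫ x, β (γ * (f x - hhat x)) / γ ∂θ ≤
        (∫ x, h x ∂μ0) + ∫ x, β (γ * (f x - h x)) / γ ∂θ) :
    memQ μ0 (H : Set (X →ᵇ ℝ))
        (θ.withDensity fun x => ENNReal.ofReal (deriv β (γ * (f x - hhat x)))) ∧
      phiReg μ0 θ (H : Set (X →ᵇ ℝ)) β γ f =
        (∫ x, f x ∂(θ.withDensity fun x => ENNReal.ofReal (deriv β (γ * (f x - hhat x))))) -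
          (1 / γ) * ∫ x, betaConj β (deriv β (γ * (f x - hhat x))) ∂θ ∧
      ∀ μ : Measure X, memQ μ0 (H : Set (X →ᵇ ℝ)) μ → μ ≪ θ →
        Integrable (fun x => betaConj β ((μ.rnDeriv θ x).toReal)) θ →
        (∫ x, f x ∂μ) - (1 / γ) * ∫ x, betaConj β ((μ.rnDeriv θ x).toReal) ∂θ ≤
          (∫ x, f x ∂(θ.withDensity fun x => ENNReal.ofReal (deriv β (γ * (f x - hhat x))))) -
            (1 / γ) * ∫ x, betaConj β (deriv β (γ * (f x - hhat x))) ∂θ := by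
  have hmin' : IsMinOn (penalizedCost μ0 θ β γ f) H hhat := fun h hH => hmin h hH
  have hfoc : ∀ h ∈ H, ∫ x, deriv β (γ * (f x - hhat x)) * h x ∂θ = ∫ x, h x ∂μ0 :=
    fun h hH => integral_deriv_mul_eq_of_isMinOn hβconv hβdiff hγ.ne' hmin' hhatH hH
  have hDm : Measurable fun x => deriv β (γ * (f x - hhat x)) :=
    (measurable_deriv β).comp (by fun_prop)
  have hD0 : ∀ x, 0 ≤ deriv β (γ * (f x - hhat x)) := fun _ => hβmono.deriv_nonneg
  have hval : (∫ x, f x ∂(θ.withDensity fun x => ENNReal.ofReal (deriv β (γ * (f x - hhat x))))) -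
      (1 / γ) * ∫ x, betaConj β (deriv β (γ * (f x - hhat x))) ∂θ =
        penalizedCost μ0 θ β γ f hhat := by
    rw [integral_withDensity_ofReal hDm hD0, integral_deriv_mul_sub_betaConj_eq hβconv hβdiff
      hγ.ne', hfoc hhat hhatH, penalizedCost]
  refine ⟨memQ_withDensity_ofReal (hconst 1) hDm hD0 hfoc, ?_, fun μ hμ hac hint => ?_⟩
  · rw [hval]
    exact phiReg_eq_of_isMinOn hmin' hhatH
  · rw [hval]
    exact integral_sub_betaConj_le_penalizedCost hβ0 hβsl hβdiff.continuous hγ hμ hac hint f hhatH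

/-- If `ĥ ∈ H` minimizes `h ↦ ∫ h dμ0 + ∫ β_γ(f - h) dθ` over `H`, then the
probability measure `μ̂` with `dμ̂/dθ = β_γ′(f - ĥ) = β′(γ(f - ĥ))` is a maximizer of
`μ ↦ ∫ f dμ - (1/γ) ∫ β*(dμ/dθ) dθ` over `Q`; in particular
`φ_{θ,γ}(f) = ∫ f dμ̂ - (1/γ) ∫ β*(dμ̂/dθ) dθ`. -/
theorem statement5 {X : Type*} [TopologicalSpace X] [PolishSpace X]
    [MeasurableSpace X] [BorelSpace X]
    (μ0 θ : Measure X) [IsProbabilityMeasure μ0] [IsProbabilityMeasure θ]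
    (H : Submodule ℝ (X →ᵇ ℝ))
    (hconst : ∀ c : ℝ, BoundedContinuousFunction.const X c ∈ H)
    (β : ℝ → ℝ) (hβ0 : ∀ x, 0 ≤ β x) (hβdiff : Differentiable ℝ β)
    (hβmono : Monotone β) (hβconv : ConvexOn ℝ Set.univ β)
    (hβsl : Tendsto (fun x => β x / x) atTop atTop)
    (γ : ℝ) (hγ : 0 < γ)
    (π : Measure X) (hπQ : memQ μ0 (H : Set (X →ᵇ ℝ)) π) (hπac : π ≪ θ)
    (hπint : Integrable (fun x => betaConj β ((π.rnDeriv θ x).toReal)) θ)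
    (f : X →ᵇ ℝ)
    (hhat : X →ᵇ ℝ) (hhatH : hhat ∈ H)
    (hmin : ∀ h ∈ H,
      (∫ x, hhat x ∂μ0) + ∫ x, β (γ * (f x - hhat x)) / γ ∂θ ≤
        (∫ x, h x ∂μ0) + ∫ x, β (γ * (f x - h x)) / γ ∂θ) :
    memQ μ0 (H : Set (X →ᵇ ℝ))
        (θ.withDensity fun x => ENNReal.ofReal (deriv β (γ * (f x - hhat x)))) ∧
      phiReg μ0 θ (H : Set (X →ᵇ ℝ)) β γ f =
        (∫ x, f x ∂(θ.withDensity fun x => ENNReal.ofReal (deriv β (γ * (f x - hhat x))))) -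
          (1 / γ) * ∫ x, betaConj β (deriv β (γ * (f x - hhat x))) ∂θ ∧
      ∀ μ : Measure X, memQ μ0 (H : Set (X →ᵇ ℝ)) μ → μ ≪ θ →
        Integrable (fun x => betaConj β ((μ.rnDeriv θ x).toReal)) θ →
        (∫ x, f x ∂μ) - (1 / γ) * ∫ x, betaConj β ((μ.rnDeriv θ x).toReal) ∂θ ≤
          (∫ x, f x ∂(θ.withDensity fun x => ENNReal.ofReal (deriv β (γ * (f x - hhat x))))) -
            (1 / γ) * ∫ x, betaConj β (deriv β (γ * (f x - hhat x))) ∂θ :=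
  statement5_general μ0 θ H hconst β hβ0 hβdiff hβmono hβconv hβsl γ hγ f hhat hhatH hmin
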